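/- arXiv:2401.12653 — 2 statements merged into one kernel-verified Lean document; each statement's English description precedes it below -/
import Mathlib

section
/- Let I_A and I_B be two MatP instances on the same bipartite graph G = (W ∪ F, E) that differ only in the preference order of a single agent x, let e = {x,y} ∈ E, and let I_H be a hybrid instance of (I_A, I_B) with respect to e. If M is a matching with e ∈ M and M is dominant for I_H, then M is dominant for both I_A and I_B. -/
open Classical

/-- An instance of matching under preferences (MatP): a bipartite graph on
workers `W` and firms `F` together with, for each agent, a strict linear order
on its neighbors (`pref x y z` means `x` strictly prefers `y` to `z`). -/
structure MatP (α : Type*) where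
  W : Finset α
  F : Finset α
  disjWF : Disjoint W F
  adj : α → α → Prop
  adj_symm : ∀ x y, adj x y → adj y x
  adj_loopless : ∀ x, ¬ adj x x
  adj_bipartite : ∀ x y, adj x y → (x ∈ W ∧ y ∈ F) ∨ (x ∈ F ∧ y ∈ W)
  pref : α → α → α → Prop
  pref_adj : ∀ x y z, pref x y z → adj x y ∧ adj x z
  pref_trans : ∀ x y z w, pref x y z → pref x z w → pref x y w
  pref_irrefl : ∀ x y, ¬ pref x y y
  pref_total : ∀ x y z, adj x y → adj x z → y ≠ z → pref x y z ∨ pref x z y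

/-- `M` is a matching of instance `I`, encoded as a symmetric partial partner
function: `M x = some y` means the edge `{x,y}` belongs to the matching. -/
def IsMatching {α : Type*} (I : MatP α) (M : α → Option α) : Prop :=
  (∀ x y, M x = some y → I.adj x y) ∧ (∀ x y, M x = some y → M y = some x)

/-- Agent `x` prefers (partner) option `o` to option `o'`:
being matched beats being unmatched, and among partners `x` uses `I.pref`. -/
def Better {α : Type*} (I : MatP α) (x : α) : Option α → Option α → Prop
  | some _, none => True
  | some y, some z => I.pref x y z
  | none, _ => False

/-- The vote of agent `x` between partner options `o` and `o'`. -/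
noncomputable def voteO {α : Type*} (I : MatP α) (x : α) (o o' : Option α) : ℤ :=
  if Better I x o o' then 1 else if Better I x o' o then -1 else 0

/-- Popularity margin `Δ^I(M,M')`: the sum of all agents' votes. -/
noncomputable def margin {α : Type*} [DecidableEq α]
    (I : MatP α) (M M' : α → Option α) : ℤ :=
  ∑ x ∈ I.W ∪ I.F, voteO I x (M x) (M' x)

/-- `M` is popular for `I`: it does not lose against any matching. -/
def Popular {α : Type*} [DecidableEq α] (I : MatP α) (M : α → Option α) : Prop :=
  ∀ M', IsMatching I M' → 0 ≤ margin I M M'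

/-- Number of matched agents: twice the number of edges of the matching. -/
noncomputable def msize {α : Type*} [Fintype α] (M : α → Option α) : ℕ :=
  (Finset.univ.filter fun x => (M x).isSome).card

/-- `M` is dominant for `I`: popular and strictly defeats every larger matching. -/
def Dominant {α : Type*} [Fintype α] [DecidableEq α]
    (I : MatP α) (M : α → Option α) : Prop :=
  Popular I M ∧ ∀ M', IsMatching I M' → msize M < msize M' → 0 < margin I M M'

/-- `IA` and `IB` are MatP instances on the same bipartite graph that differ
only in the preference order of the single agent `x`. -/
def SameExcept {α : Type*} (IA IB : MatP α) (x : α) : Prop :=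
  IA.W = IB.W ∧ IA.F = IB.F ∧ IA.adj = IB.adj ∧
  ∀ z, z ≠ x → ∀ u v, (IA.pref z u v ↔ IB.pref z u v)

/-- `IH` is a hybrid instance of `(IA, IB)` with respect to the edge `{x,y}`:
same graph, all agents other than `x` keep their `IA` preferences, and in `x`'s
preference order exactly the agents preferred to `y` in `IA` or in `IB`
are placed above `y`. -/
def IsHybrid {α : Type*} (IA IB IH : MatP α) (x y : α) : Prop :=
  IH.W = IA.W ∧ IH.F = IA.F ∧ IH.adj = IA.adj ∧
  (∀ z, z ≠ x → ∀ u v, (IH.pref z u v ↔ IA.pref z u v)) ∧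
  (∀ z, (IA.pref x z y ∨ IB.pref x z y) → IH.pref x z y) ∧
  (∀ z, IA.adj x z → z ≠ y → ¬(IA.pref x z y ∨ IB.pref x z y) → IH.pref x y z)

private lemma pref_not_both {α : Type*} (I : MatP α) (x u v : α)
    (h : I.pref x u v) : ¬ I.pref x v u :=
  fun h' => I.pref_irrefl x u (I.pref_trans x u v u h h')

private lemma voteO_le_one {α : Type*} (I : MatP α) (z : α) (o o' : Option α) :
    voteO I z o o' ≤ 1 := by
  unfold voteO; split_ifs <;> norm_num

private lemma voteO_congr {α : Type*} (I J : MatP α) (z : α)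
    (h : ∀ u v, I.pref z u v ↔ J.pref z u v) (o o' : Option α) :
    voteO I z o o' = voteO J z o o' := by
  have hB : ∀ a b : Option α, Better I z a b ↔ Better J z a b := by
    intro a b; cases a <;> cases b <;> simp [Better, h]
  unfold voteO
  simp only [hB]

private lemma vote_x_le {α : Type*} (I IH : MatP α) (x y : α)
    (h1 : ∀ z, I.pref x z y → IH.pref x z y)
    (hxy : I.adj x y)
    (o' : Option α) (hadj : ∀ z, o' = some z → I.adj x z) :
    voteO IH x (some y) o' ≤ voteO I x (some y) o' := by
  cases o' with
  | none => unfold voteO; simp [Better]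
  | some z =>
    by_cases hzy : z = y
    · subst hzy
      unfold voteO
      simp [Better, I.pref_irrefl, IH.pref_irrefl]
    · by_cases hp : I.pref x z y
      · have hpH := h1 z hp
        have h2 : ¬ I.pref x y z := pref_not_both I x z y hp
        have h2H : ¬ IH.pref x y z := pref_not_both IH x z y hpH
        unfold voteO
        simp [Better, h2, h2H, hp, hpH]
      · have hyz : I.pref x y z := by
          rcases I.pref_total x y z hxy (hadj z rfl) (Ne.symm hzy) with h | h
          · exact h
          · exact absurd h hp
        calc voteO IH x (some y) (some z) ≤ 1 := voteO_le_one ..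
          _ = voteO I x (some y) (some z) := by unfold voteO; simp [Better, hyz]

/-- Lemma 1(2): if a matching containing the edge `{x,y}` is dominant for the
hybrid instance, then it is (robust) dominant for both `IA` and `IB`. -/
theorem hybrid_dominant_of_dominant {α : Type*} [Fintype α] [DecidableEq α]
    (IA IB IH : MatP α) (x y : α)
    (hsame : SameExcept IA IB x)
    (he : IA.adj x y)
    (hH : IsHybrid IA IB IH x y)
    (M : α → Option α) (hM : IsMatching IA M) (hMx : M x = some y)
    (hdom : Dominant IH M) :
    Dominant IA M ∧ Dominant IB M := by
  obtain ⟨hW, hF, hadj, hprefne, hup, hdown⟩ := hH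
  obtain ⟨hWB, hFB, hadjB, hprefB⟩ := hsame
  have hmatchA : ∀ M', IsMatching IA M' → IsMatching IH M' := by
    intro M' h; unfold IsMatching at *; rw [hadj]; exact h
  have hmatchB : ∀ M', IsMatching IB M' → IsMatching IH M' := by
    intro M' h; unfold IsMatching at *; rw [hadj, hadjB]; exact h
  have keyA : ∀ M', IsMatching IA M' → margin IH M M' ≤ margin IA M M' := by
    intro M' hM'
    unfold margin
    rw [hW, hF]
    apply Finset.sum_le_sum
    intro z _
    by_cases hz : z = x
    · subst hz
      rw [hMx]
      exact vote_x_le IA IH z y (fun w hw => hup w (Or.inl hw)) he _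
        (fun w hw => hM'.1 z w hw)
    · exact le_of_eq (voteO_congr IH IA z (hprefne z hz) _ _)
  have keyB : ∀ M', IsMatching IB M' → margin IH M M' ≤ margin IB M M' := by
    intro M' hM'
    unfold margin
    rw [hW, hF, hWB, hFB]
    apply Finset.sum_le_sum
    intro z _
    by_cases hz : z = x
    · subst hz
      rw [hMx]
      refine vote_x_le IB IH z y (fun w hw => hup w (Or.inr hw)) ?_ _
        (fun w hw => hM'.1 z w hw)
      rw [← hadjB]; exact he
    · exact le_of_eq (voteO_congr IH IB z
        (fun u v => (hprefne z hz u v).trans (hprefB z hz u v)) _ _)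
  constructor
  · constructor
    · intro M' hM'
      exact le_trans (hdom.1 M' (hmatchA M' hM')) (keyA M' hM')
    · intro M' hM' hsz
      exact lt_of_lt_of_le (hdom.2 M' (hmatchA M' hM') hsz) (keyA M' hM')
  · constructor
    · intro M' hM'
      exact le_trans (hdom.1 M' (hmatchB M' hM')) (keyB M' hM')
    · intro M' hM' hsz
      exact lt_of_lt_of_le (hdom.2 M' (hmatchB M' hM') hsz) (keyB M' hM')
end

section
/- Let I_A and I_B be two MatP instances on the same bipartite graph such that the preference orders of I_A and I_B agree on every agent except possibly agents that are unmatched in every popular matching of I_A. Then every matching that is popular for I_A is also popular for I_B; in particular, a robust popular matching with respect to I_A and I_B exists. -/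
open Classical

/-- An agent is unpopular in `I` if it is unmatched in every popular matching of `I`. -/
def Unpopular {α : Type*} [DecidableEq α] (I : MatP α) (z : α) : Prop :=
  ∀ M, IsMatching I M → Popular I M → M z = none


/-!
If `M` is popular for `I_A`, every agent whose preferences differ between `I_A` and `I_B` is
unmatched in `M`, and the vote of an agent unmatched in `M` does not depend on its preferences
(it is `-1` against a matching where it is matched, `0` otherwise). So `Δ^{I_B}(M, ·)` equals
`Δ^{I_A}(M, ·)` and `M` stays popular. A popular matching of `I_A` exists because stable
matchings, which deferred acceptance produces, are popular: sending every agent that prefers `M'`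
to its partner in `M'` injects them into the agents that prefer `M`.
-/

section GreatestBy
variable {α : Type*} {r : α → α → Prop} {s : Finset α} {m : α}

def IsGreatestBy (r : α → α → Prop) (s : Finset α) (m : α) : Prop :=
  m ∈ s ∧ ∀ y ∈ s, y ≠ m → r m y

noncomputable def greatestBy (r : α → α → Prop) (s : Finset α) : Option α :=
  if h : ∃ m, IsGreatestBy r s m then some h.choose else none

theorem IsGreatestBy.unique [Std.Asymm r] {m' : α} (h : IsGreatestBy r s m)
    (h' : IsGreatestBy r s m') : m = m' := by
  by_contra hne
  exact asymm (h.2 m' h'.1 (Ne.symm hne)) (h'.2 m h.1 hne)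

theorem greatestBy_eq_some_iff [Std.Asymm r] : greatestBy r s = some m ↔ IsGreatestBy r s m := by
  unfold greatestBy
  constructor
  · intro h
    split_ifs at h with hex
    exact Option.some_injective _ h ▸ hex.choose_spec
  · intro hm
    rw [dif_pos ⟨m, hm⟩]
    exact congrArg some ((Exists.choose_spec ⟨m, hm⟩).unique hm)

theorem exists_isGreatestBy [IsStrictOrder α r]
    (htot : ∀ a ∈ s, ∀ b ∈ s, a ≠ b → r a b ∨ r b a) (hs : s.Nonempty) :
    ∃ m, IsGreatestBy r s m := by
  -- in this order `<` is `r`, so the `r`-greatest element is a minimal one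
  let := partialOrderOfSO r
  obtain ⟨m, hms, hmin⟩ := s.exists_minimal hs
  refine ⟨m, hms, fun y hy hym => (htot m hms y hy hym.symm).resolve_right fun hrym => ?_⟩
  rcases hmin hy (Or.inr hrym) with h | h
  · exact hym h.symm
  · exact asymm h hrym

end GreatestBy

section Preferences
variable {α : Type*}

instance MatP.instIsStrictOrderPref (I : MatP α) (x : α) : IsStrictOrder α (I.pref x) where
  irrefl := I.pref_irrefl x
  trans := I.pref_trans x

theorem MatP.mem_W_union_F_of_adj [DecidableEq α] (I : MatP α) {x y : α} (h : I.adj x y) :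
    y ∈ I.W ∪ I.F := by
  rcases I.adj_bipartite x y h with h | h
  · exact Finset.mem_union_right _ h.2
  · exact Finset.mem_union_left _ h.2

theorem IsMatching.eq_of_eq_some {I : MatP α} {M : α → Option α} (hM : IsMatching I M)
    {x₁ x₂ y : α} (h₁ : M x₁ = some y) (h₂ : M x₂ = some y) : x₁ = x₂ :=
  Option.some_injective _ ((hM.2 x₁ y h₁).symm.trans (hM.2 x₂ y h₂))

theorem isMatching_iff_of_adj_eq {I J : MatP α} (h : I.adj = J.adj) {M : α → Option α} :
    IsMatching I M ↔ IsMatching J M := by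
  rw [IsMatching, IsMatching, h]

theorem Better.exists_eq_some {I : MatP α} {x : α} {o o' : Option α} (h : Better I x o o') :
    ∃ y, o = some y := by
  cases o with
  | none => exact h.elim
  | some y => exact ⟨y, rfl⟩

theorem Better.asymm {I : MatP α} {x : α} {o o' : Option α} (h : Better I x o o') :
    ¬ Better I x o' o := by
  match o, o', h with
  | some _, none, _ => exact id
  | some _, some _, h => exact _root_.asymm (r := I.pref x) h

theorem better_eq_of_pref_eq {I J : MatP α} {x : α} (h : I.pref x = J.pref x) :
    Better I x = Better J x := by
  funext o o'
  cases o <;> cases o' <;> simp only [Better, h]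

theorem voteO_eq_of_pref_eq {I J : MatP α} {x : α} (h : I.pref x = J.pref x) :
    voteO I x = voteO J x := by
  funext o o'
  simp only [voteO, better_eq_of_pref_eq h]

theorem voteO_none_left (I J : MatP α) (x : α) (o : Option α) :
    voteO I x none o = voteO J x none o := by
  cases o <;> simp [voteO, Better]

end Preferences

section Margin
variable {α : Type*} [DecidableEq α]

theorem margin_eq_of_pref_eq_of_matched {I J : MatP α} (hW : I.W = J.W) (hF : I.F = J.F)
    {M : α → Option α} (M' : α → Option α)
    (h : ∀ x, M x ≠ none → I.pref x = J.pref x) :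
    margin I M M' = margin J M M' := by
  rw [margin, margin, hW, hF]
  refine Finset.sum_congr rfl fun x _ => ?_
  by_cases hx : M x = none
  · rw [hx, voteO_none_left]
  · rw [voteO_eq_of_pref_eq (h x hx)]

theorem Popular.of_pref_eq_of_matched {I J : MatP α} (hW : I.W = J.W) (hF : I.F = J.F)
    (hadj : I.adj = J.adj) {M : α → Option α} (hP : Popular I M)
    (h : ∀ x, M x ≠ none → I.pref x = J.pref x) : Popular J M := fun M' hM' =>
  margin_eq_of_pref_eq_of_matched hW hF M' h ▸ hP M' ((isMatching_iff_of_adj_eq hadj).2 hM')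

theorem margin_eq_card_sub_card (I : MatP α) (M M' : α → Option α) :
    margin I M M' =
      ((I.W ∪ I.F).filter fun x => Better I x (M x) (M' x)).card -
      ((I.W ∪ I.F).filter fun x => Better I x (M' x) (M x)).card := by
  have hvote : ∀ x, voteO I x (M x) (M' x) =
      (if Better I x (M x) (M' x) then (1 : ℤ) else 0) -
      (if Better I x (M' x) (M x) then (1 : ℤ) else 0) := by
    intro x
    by_cases h : Better I x (M x) (M' x)
    · simp [voteO, h, h.asymm]
    · by_cases h' : Better I x (M' x) (M x) <;> simp [voteO, h, h']
  simp only [margin, hvote, Finset.sum_sub_distrib, Finset.sum_boole]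

end Margin

section Stable
variable {α : Type*}

def Stable (I : MatP α) (M : α → Option α) : Prop :=
  ∀ x y, I.adj x y → Better I x (some y) (M x) → ¬ Better I y (some x) (M y)

theorem stable_of_worker_firm {I : MatP α} {M : α → Option α}
    (h : ∀ w ∈ I.W, ∀ f ∈ I.F, I.adj w f →
      Better I w (some f) (M w) → ¬ Better I f (some w) (M f)) : Stable I M := by
  intro x y hxy hx hy
  rcases I.adj_bipartite x y hxy with ⟨hxW, hyF⟩ | ⟨hxF, hyW⟩
  · exact h x hxW y hyF hxy hx hy
  · exact h y hyW x hxF (I.adj_symm x y hxy) hy hx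

theorem Stable.better_of_better_partner {I : MatP α} {M M' : α → Option α}
    (hM : IsMatching I M) (hS : Stable I M) (hM' : IsMatching I M') {x y : α}
    (hy : M' x = some y) (hx : Better I x (M' x) (M x)) : Better I y (M y) (M' y) := by
  rw [hy] at hx
  have hnot : ¬ Better I y (some x) (M y) := hS x y (hM'.1 x y hy) hx
  rw [hM'.2 x y hy]
  cases hMy : M y with
  | none => exact (hnot (hMy ▸ trivial)).elim
  | some u =>
    have hux : u ≠ x := by
      rintro rfl
      rw [hM.2 y u hMy] at hx
      exact I.pref_irrefl u y hx
    rw [hMy] at hnot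
    exact (I.pref_total y u x (hM.1 y u hMy) (I.adj_symm x y (hM'.1 x y hy)) hux).resolve_right hnot

theorem Stable.popular [DecidableEq α] {I : MatP α} {M : α → Option α}
    (hM : IsMatching I M) (hS : Stable I M) : Popular I M := by
  intro M' hM'
  rw [margin_eq_card_sub_card, sub_nonneg, Nat.cast_le]
  refine Finset.card_le_card_of_injOn (fun x => (M' x).getD x) (fun x hx => ?_) ?_
  · rw [Finset.mem_coe, Finset.mem_filter] at hx ⊢
    obtain ⟨y, hy⟩ := hx.2.exists_eq_some
    simp only [hy, Option.getD_some]
    exact ⟨I.mem_W_union_F_of_adj (hM'.1 x y hy), hS.better_of_better_partner hM hM' hy hx.2⟩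
  · intro x₁ hx₁ x₂ hx₂ heq
    rw [Finset.coe_filter] at hx₁ hx₂
    obtain ⟨y₁, hy₁⟩ := hx₁.2.exists_eq_some
    obtain ⟨y₂, hy₂⟩ := hx₂.2.exists_eq_some
    simp only [hy₁, hy₂, Option.getD_some] at heq
    exact hM'.eq_of_eq_some hy₁ (heq ▸ hy₂)

end Stable

/- Deferred acceptance, run on the set `R` of rejected worker–firm pairs: every worker proposes
to its favourite firm that has not rejected it, every firm holds its favourite proposer, and
`reject` adds the pairs rejected in this round. -/
namespace MatP
variable {α : Type*} (I : MatP α)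

theorem exists_greatestBy_pref_eq_some (x : α) {s : Finset α} (hs : ∀ y ∈ s, I.adj x y)
    (hne : s.Nonempty) : ∃ m, greatestBy (I.pref x) s = some m :=
  (exists_isGreatestBy (fun a ha b hb => I.pref_total x a b (hs a ha) (hs b hb)) hne).imp
    fun _ => greatestBy_eq_some_iff.2

noncomputable def proposal (R : Finset (α × α)) (w : α) : Option α :=
  greatestBy (I.pref w) (I.F.filter fun f => I.adj w f ∧ (w, f) ∉ R)

noncomputable def held (R : Finset (α × α)) (f : α) : Option α :=
  greatestBy (I.pref f) (I.W.filter fun w => I.proposal R w = some f)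

noncomputable def reject (R : Finset (α × α)) : Finset (α × α) :=
  R ∪ (I.W ×ˢ I.F).filter fun p => I.proposal R p.1 = some p.2 ∧ I.held R p.2 ≠ some p.1

def RejectionsJustified (R : Finset (α × α)) : Prop :=
  ∀ p ∈ R, ∃ w, I.held R p.2 = some w ∧ I.pref p.2 w p.1

variable {I} {R : Finset (α × α)} {w f : α}

theorem proposal_eq_some_iff : I.proposal R w = some f ↔
    f ∈ I.F ∧ I.adj w f ∧ (w, f) ∉ R ∧
      ∀ g ∈ I.F, I.adj w g → (w, g) ∉ R → g ≠ f → I.pref w f g := by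
  simp only [proposal, greatestBy_eq_some_iff, IsGreatestBy, Finset.mem_filter, and_imp, and_assoc]

theorem held_eq_some_iff : I.held R f = some w ↔
    w ∈ I.W ∧ I.proposal R w = some f ∧
      ∀ v ∈ I.W, I.proposal R v = some f → v ≠ w → I.pref f w v := by
  simp only [held, greatestBy_eq_some_iff, IsGreatestBy, Finset.mem_filter, and_imp, and_assoc]

theorem exists_proposal_eq_some (hf : f ∈ I.F) (hwf : I.adj w f) (hR : (w, f) ∉ R) :
    ∃ g, I.proposal R w = some g :=
  I.exists_greatestBy_pref_eq_some w (fun _ hg => (Finset.mem_filter.1 hg).2.1)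
    ⟨f, Finset.mem_filter.2 ⟨hf, hwf, hR⟩⟩

theorem exists_held_eq_some (hw : w ∈ I.W) (hwf : I.proposal R w = some f) :
    ∃ v, I.held R f = some v :=
  I.exists_greatestBy_pref_eq_some f
    (fun v hv => I.adj_symm v f (proposal_eq_some_iff.1 (Finset.mem_filter.1 hv).2).2.1)
    ⟨w, Finset.mem_filter.2 ⟨hw, hwf⟩⟩

theorem proposal_reject_of_held (h : I.held R f = some w) :
    I.proposal (I.reject R) w = some f := by
  obtain ⟨-, hwf, -⟩ := held_eq_some_iff.1 h
  obtain ⟨hf, hadj, hR, hbest⟩ := proposal_eq_some_iff.1 hwf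
  refine proposal_eq_some_iff.2 ⟨hf, hadj, ?_, fun g hg hwg hgR hgf => hbest g hg hwg
    (fun hgR' => hgR (Finset.mem_union_left _ hgR')) hgf⟩
  simp only [reject, Finset.mem_union, Finset.mem_filter]
  rintro (hR' | ⟨-, -, hne⟩)
  exacts [hR hR', hne h]

theorem exists_held_reject_of_held (h : I.held R f = some w) :
    ∃ v, I.held (I.reject R) f = some v ∧ (v = w ∨ I.pref f v w) := by
  have hw : w ∈ I.W := (held_eq_some_iff.1 h).1
  have hwf := proposal_reject_of_held h
  obtain ⟨v, hv⟩ := exists_held_eq_some hw hwf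
  refine ⟨v, hv, or_iff_not_imp_left.2 fun hvw => ?_⟩
  exact (held_eq_some_iff.1 hv).2.2 w hw hwf (Ne.symm hvw)

theorem exists_held_pref_of_mem_reject (hR : I.RejectionsJustified R) (hp : (w, f) ∈ I.reject R) :
    ∃ v, I.held R f = some v ∧ I.pref f v w := by
  rcases Finset.mem_union.1 hp with hp | hp
  · exact hR _ hp
  obtain ⟨hWF, hwf, hne⟩ := Finset.mem_filter.1 hp
  have hw : w ∈ I.W := (Finset.mem_product.1 hWF).1
  obtain ⟨v, hv⟩ := exists_held_eq_some hw hwf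
  exact ⟨v, hv, (held_eq_some_iff.1 hv).2.2 w hw hwf fun hwv => hne (hwv ▸ hv)⟩

theorem RejectionsJustified.reject (hR : I.RejectionsJustified R) :
    I.RejectionsJustified (I.reject R) := by
  rintro ⟨w, f⟩ hp
  obtain ⟨v, hv, hvw⟩ := exists_held_pref_of_mem_reject hR hp
  obtain ⟨u, hu, rfl | huv⟩ := exists_held_reject_of_held hv
  exacts [⟨u, hu, hvw⟩, ⟨u, hu, I.pref_trans f u v w huv hvw⟩]

/-- `reject` only adds pairs from the finite set `W × F`, so a justified `R` of largest size is
a fixed point. -/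
theorem exists_reject_eq_self : ∃ R, I.RejectionsJustified R ∧ I.reject R = R := by
  let S := (I.W ×ˢ I.F).powerset.filter I.RejectionsJustified
  have hempty : ∅ ∈ S :=
    Finset.mem_filter.2 ⟨Finset.empty_mem_powerset _, fun _ h => (Finset.notMem_empty _ h).elim⟩
  obtain ⟨R, hRS, hmax⟩ := S.exists_max_image Finset.card ⟨∅, hempty⟩
  obtain ⟨hRWF, hR⟩ := Finset.mem_filter.1 hRS
  refine ⟨R, hR, ?_⟩
  by_contra hne
  have hrej : I.reject R ∈ S := Finset.mem_filter.2
    ⟨Finset.mem_powerset.2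
      (Finset.union_subset (Finset.mem_powerset.1 hRWF) (Finset.filter_subset _ _)), hR.reject⟩
  exact (hmax _ hrej).not_gt
    (Finset.card_lt_card (Finset.subset_union_left.ssubset_of_ne (Ne.symm hne)))

noncomputable def matchingOf (R : Finset (α × α)) (x : α) : Option α :=
  if x ∈ I.W then I.proposal R x else if x ∈ I.F then I.held R x else none

theorem matchingOf_of_mem_W (hw : w ∈ I.W) : I.matchingOf R w = I.proposal R w := if_pos hw

theorem matchingOf_of_mem_F (hf : f ∈ I.F) : I.matchingOf R f = I.held R f :=
  (if_neg (Finset.disjoint_right.1 I.disjWF hf)).trans (if_pos hf)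

theorem held_of_proposal_of_reject_eq (hfix : I.reject R = R) (hw : w ∈ I.W)
    (hwf : I.proposal R w = some f) : I.held R f = some w := by
  obtain ⟨hf, -, hR, -⟩ := proposal_eq_some_iff.1 hwf
  by_contra hne
  exact hR (hfix ▸ Finset.mem_union_right _
    (Finset.mem_filter.2 ⟨Finset.mem_product.2 ⟨hw, hf⟩, hwf, hne⟩))

theorem matchingOf_eq_some {x y : α} (h : I.matchingOf R x = some y) :
    (x ∈ I.W ∧ I.proposal R x = some y) ∨ (x ∈ I.F ∧ I.held R x = some y) := by
  unfold matchingOf at h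
  split_ifs at h with hxW hxF
  exacts [Or.inl ⟨hxW, h⟩, Or.inr ⟨hxF, h⟩]

theorem isMatching_matchingOf (hfix : I.reject R = R) : IsMatching I (I.matchingOf R) := by
  constructor
  · intro x y hxy
    rcases matchingOf_eq_some hxy with ⟨-, hxy⟩ | ⟨-, hxy⟩
    · exact (proposal_eq_some_iff.1 hxy).2.1
    · exact I.adj_symm _ _ (proposal_eq_some_iff.1 (held_eq_some_iff.1 hxy).2.1).2.1
  · intro x y hxy
    rcases matchingOf_eq_some hxy with ⟨hx, hxy⟩ | ⟨-, hxy⟩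
    · rw [matchingOf_of_mem_F (proposal_eq_some_iff.1 hxy).1]
      exact held_of_proposal_of_reject_eq hfix hx hxy
    · obtain ⟨hy, hyx, -⟩ := held_eq_some_iff.1 hxy
      rw [matchingOf_of_mem_W hy, hyx]

theorem stable_matchingOf (hR : I.RejectionsJustified R) :
    Stable I (I.matchingOf R) := by
  refine stable_of_worker_firm fun w hw f hf hwf hbetter => ?_
  rw [matchingOf_of_mem_W hw] at hbetter
  have hfR : (w, f) ∈ R := by
    by_contra hfR
    obtain ⟨g, hg⟩ := exists_proposal_eq_some hf hwf hfR
    rw [hg] at hbetter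
    have hgf : g ≠ f := fun h => I.pref_irrefl w f (h ▸ hbetter)
    exact _root_.asymm (r := I.pref w) hbetter
      ((proposal_eq_some_iff.1 hg).2.2.2 f hf hwf hfR hgf.symm)
  obtain ⟨v, hv, hvw⟩ := hR _ hfR
  rw [matchingOf_of_mem_F hf, hv]
  exact _root_.asymm (r := I.pref f) hvw

theorem exists_stable : ∃ M, IsMatching I M ∧ Stable I M := by
  obtain ⟨R, hR, hfix⟩ := I.exists_reject_eq_self
  exact ⟨I.matchingOf R, isMatching_matchingOf hfix, stable_matchingOf hR⟩

end MatP

/-- If the preferences of `IA` and `IB` agree on every agent except possibly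
agents that are unmatched in every popular matching of `IA`, then every popular
matching of `IA` is popular for `IB`; in particular a robust popular matching
with respect to `IA` and `IB` exists. -/
theorem robust_of_only_unpopular_perturbed {α : Type*} [DecidableEq α]
    (IA IB : MatP α)
    (hW : IA.W = IB.W) (hF : IA.F = IB.F) (hadj : IA.adj = IB.adj)
    (hpref : ∀ z, ¬ Unpopular IA z → ∀ u v, (IA.pref z u v ↔ IB.pref z u v)) :
    (∀ M, IsMatching IA M → Popular IA M → Popular IB M) ∧
    (∃ M, IsMatching IA M ∧ Popular IA M ∧ Popular IB M) := by
  have transfer : ∀ M, IsMatching IA M → Popular IA M → Popular IB M := fun M hM hP =>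
    hP.of_pref_eq_of_matched hW hF hadj fun x hx =>
      funext₂ fun u v => propext (hpref x (fun hU => hx (hU M hM hP)) u v)
  obtain ⟨M, hM, hS⟩ := IA.exists_stable
  have hP : Popular IA M := hS.popular hM
  exact ⟨transfer, M, hM, hP, transfer M hM hP⟩
end
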